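/- arXiv:1006.3437 — 7 statements merged into one kernel-verified Lean document; each statement's English description precedes it below -/
import Mathlib

section
/- Let τ = (−1+i√7)/2 and p = 4. Then |τ̄² + e^{−2πi/p}·τ − τ| = √(3 − √7), and this quantity is strictly less than 1. -/
/-! With `e^{-2πi/4} = -i` and `τ̄ = (-1 - i√7)/2`, the quantity is the explicit complex number
`(√7 - 2)/2 + i/2`, of squared modulus `3 - √7`; this is less than `1` because `√7 > 2`. -/

open Real Complex

lemma exp_neg_two_pi_mul_I_div_four : exp (-2 * π * I / 4) = -I := by
  rw [← exp_neg_pi_div_two_mul_I]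
  ring_nf

lemma conj_sq_sub_one_add_I_mul_eq (τ : ℂ) (hτ : τ = (-1 + I * √7) / 2) :
    (starRingEnd ℂ) τ ^ 2 - (1 + I) * τ = ((√7 - 2) / 2 : ℝ) + (1 / 2 : ℝ) * I := by
  have h7 : ((√7 : ℝ) : ℂ) ^ 2 = 7 := by
    rw [← ofReal_pow, sq_sqrt (by norm_num)]
    norm_num
  subst hτ
  simp only [map_div₀, map_add, map_mul, map_neg, map_one, map_ofNat, conj_I, conj_ofReal]
  push_cast
  linear_combination ((√7 : ℂ) ^ 2 / 4 - (√7 : ℂ) / 2) * I_sq - h7 / 4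

lemma norm_sqrt_seven_sub_two_div_two_add_half_mul_I :
    ‖(((√7 - 2) / 2 : ℝ) : ℂ) + (1 / 2 : ℝ) * I‖ = √(3 - √7) := by
  rw [norm_add_mul_I]
  congr 1
  nlinarith [sq_sqrt (show (0 : ℝ) ≤ 7 by norm_num)]

lemma sqrt_three_sub_sqrt_seven_lt_one : √(3 - √7) < 1 := by
  have h2 : 2 < √7 := by
    rw [lt_sqrt zero_le_two]
    norm_num
  rw [sqrt_lt' one_pos]
  linarith

theorem shimizu_quantity_sigma4 (τ : ℂ) (hτ : τ = (-1 + I * Real.sqrt 7) / 2) :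
    ‖(starRingEnd ℂ) τ ^ 2 + Complex.exp (-2 * π * I / 4) * τ - τ‖ =
      Real.sqrt (3 - Real.sqrt 7) ∧
    ‖(starRingEnd ℂ) τ ^ 2 + Complex.exp (-2 * π * I / 4) * τ - τ‖ < 1 := by
  have hnorm : ‖(starRingEnd ℂ) τ ^ 2 + exp (-2 * π * I / 4) * τ - τ‖ = √(3 - √7) := by
    rw [exp_neg_two_pi_mul_I_div_four, ← norm_sqrt_seven_sub_two_div_two_add_half_mul_I,
      ← conj_sq_sub_one_add_I_mul_eq τ hτ]
    ring_nf
  exact ⟨hnorm, hnorm ▸ sqrt_three_sub_sqrt_seven_lt_one⟩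
end

section
/- With J, R₁, and H_τ as defined (J the cyclic permutation matrix; R₁ the upper-triangular matrix with diagonal (e^{2iψ/3}, e^{−iψ/3}, e^{−iψ/3}) and first row (e^{2iψ/3}, τ, −e^{iψ/3}·conj(τ)); H_τ the circulant-type Hermitian matrix with diagonal 2sin(ψ/2) and off-diagonal entries ±i·e^{∓iψ/6}·τ or conj(τ) as specified), we have R₁ᴴ H_τ R₁ = H_τ. -/
open Real Complex Matrix

/-!
Write `e = exp (iψ/6)`. Every entry of `R₁` and `H_τ` is a Laurent monomial in `e` times `1`, `τ`
or `conj τ`; in particular `2 sin (ψ/2) = i (e⁻³ - e³)`. Since `|e| = 1`, conjugation acts by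
`e ↦ e⁻¹`, so each entry of `R₁ᴴ H_τ R₁ = H_τ` becomes an identity of Laurent polynomials in `e`.
-/

open ComplexConjugate

noncomputable def reflectionR₁ (e τ : ℂ) : Matrix (Fin 3) (Fin 3) ℂ :=
  !![e ^ 4, τ, -e ^ 2 * conj τ; 0, e⁻¹ ^ 2, 0; 0, 0, e⁻¹ ^ 2]

noncomputable def hermitianFormH (e τ : ℂ) : Matrix (Fin 3) (Fin 3) ℂ :=
  let s := I * (e⁻¹ ^ 3 - e ^ 3)
  !![s, -I * e⁻¹ * τ, I * e * conj τ;
     I * e * conj τ, s, -I * e⁻¹ * τ;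
     -I * e⁻¹ * τ, I * e * conj τ, s]

theorem reflectionR₁_conjTranspose_mul_hermitianFormH_mul {e : ℂ} (he : ‖e‖ = 1) (τ : ℂ) :
    (reflectionR₁ e τ)ᴴ * hermitianFormH e τ * reflectionR₁ e τ = hermitianFormH e τ := by
  have he0 : e ≠ 0 := norm_ne_zero_iff.mp (by simp [he])
  have hconj : conj e = e⁻¹ := by
    rw [Complex.inv_def, Complex.normSq_eq_norm_sq, he]; simp
  ext i j
  fin_cases i <;> fin_cases j <;>
    simp only [reflectionR₁, hermitianFormH, mul_apply, Fin.sum_univ_three, conjTranspose_apply,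
      of_apply, cons_val', cons_val_zero, cons_val_one, cons_val_two, head_cons, tail_cons,
      empty_val', cons_val_fin_one, head_fin_const, star_def, map_mul, map_neg, map_pow,
      map_inv₀, map_zero, conj_conj, hconj, inv_inv, Fin.isValue, Fin.zero_eta, Fin.mk_one,
      Fin.reduceFinMk] <;>
    field_simp <;> ring

theorem norm_exp_I_mul_div_six (ψ : ℝ) : ‖exp (I * ψ / 6)‖ = 1 := by
  rw [show I * ψ / 6 = ((ψ / 6 : ℝ) : ℂ) * I by push_cast; ring, norm_exp_ofReal_mul_I]

theorem two_mul_sin_half_eq_exp (ψ : ℝ) :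
    (2 * Real.sin (ψ / 2) : ℂ) = I * ((exp (I * ψ / 6))⁻¹ ^ 3 - exp (I * ψ / 6) ^ 3) := by
  rw [← Complex.exp_neg, ← Complex.exp_nat_mul, ← Complex.exp_nat_mul]
  push_cast
  rw [Complex.sin]
  ring_nf

theorem R1_preserves_Htau (ψ : ℝ) (τ : ℂ)
    (R₁ Hτ : Matrix (Fin 3) (Fin 3) ℂ)
    (hR : R₁ = Matrix.of
      ![![Complex.exp (2 * I * ψ / 3), τ, -Complex.exp (I * ψ / 3) * (starRingEnd ℂ) τ],
        ![0, Complex.exp (-I * ψ / 3), 0],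
        ![0, 0, Complex.exp (-I * ψ / 3)]])
    (hH : Hτ = Matrix.of
      ![![(2 * Real.sin (ψ / 2) : ℂ), -I * Complex.exp (-I * ψ / 6) * τ,
          I * Complex.exp (I * ψ / 6) * (starRingEnd ℂ) τ],
        ![I * Complex.exp (I * ψ / 6) * (starRingEnd ℂ) τ, (2 * Real.sin (ψ / 2) : ℂ),
          -I * Complex.exp (-I * ψ / 6) * τ],
        ![-I * Complex.exp (-I * ψ / 6) * τ, I * Complex.exp (I * ψ / 6) * (starRingEnd ℂ) τ,
          (2 * Real.sin (ψ / 2) : ℂ)]]) :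
    R₁ᴴ * Hτ * R₁ = Hτ := by
  set e := exp (I * ψ / 6)
  have h₄ : exp (2 * I * ψ / 3) = e ^ 4 := by rw [← Complex.exp_nat_mul]; ring_nf
  have h₂ : exp (I * ψ / 3) = e ^ 2 := by rw [← Complex.exp_nat_mul]; ring_nf
  have h₂' : exp (-I * ψ / 3) = e⁻¹ ^ 2 := by rw [← Complex.exp_neg, ← Complex.exp_nat_mul]; ring_nf
  have h₁' : exp (-I * ψ / 6) = e⁻¹ := by rw [← Complex.exp_neg]; ring_nf
  have hR' : R₁ = reflectionR₁ e τ := by rw [hR, h₄, h₂, h₂']; rfl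
  have hH' : Hτ = hermitianFormH e τ := by rw [hH, h₁', two_mul_sin_half_eq_exp]; rfl
  rw [hR', hH']
  exact reflectionR₁_conjTranspose_mul_hermitianFormH_mul (norm_exp_I_mul_div_six ψ) τ
end

section
/- Let ψ = 2π/p and let R₁, J be the standard generators, with R₂ = J R₁ J⁻¹. Then the matrix R₁R₂ equals the matrix with rows (e^{2iπ/3p}(1−|τ|²), e^{4iπ/3p}τ, τ²−conj(τ)), (−conj(τ), e^{2iπ/3p}, e^{−2iπ/3p}τ), (0, 0, e^{−4iπ/3p}), and its characteristic polynomial has roots −e^{2iπ/3p+riπ/s}, −e^{2iπ/3p−riπ/s}, e^{−4iπ/3p} whenever |τ|² = 2 + 2cos(rπ/s). -/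
/-!
Writing `a = e^{iψ/3}` and `σ = conj τ`, conjugating `R₁` by the cyclic permutation `J` permutes
its entries cyclically, and `R₁R₂` comes out block upper triangular: a `2 × 2` block with trace
`a (2 - τσ)` and determinant `a²`, and the corner entry `a⁻²`. If `τσ = 2 + d + d⁻¹`, where
`d + d⁻¹ = 2 cos θ` for `d = e^{iθ}`, the block's characteristic polynomial
`X² + a (d + d⁻¹) X + a²` splits as `(X + a d)(X + a d⁻¹)`.
-/

open Real Complex Matrix Polynomial

variable {K : Type*}

def cyclicPerm [Zero K] [One K] : Matrix (Fin 3) (Fin 3) K := !![0, 0, 1; 1, 0, 0; 0, 1, 0]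

theorem cyclicPerm_inv [CommRing K] :
    (cyclicPerm : Matrix (Fin 3) (Fin 3) K)⁻¹ = !![0, 1, 0; 0, 0, 1; 1, 0, 0] := by
  apply inv_eq_right_inv
  ext i j
  fin_cases i <;> fin_cases j <;> simp [cyclicPerm, Matrix.mul_apply, Fin.sum_univ_three]

theorem cyclicPerm_mul_mul_cyclicPerm_inv [CommRing K] (a b c d e f g h i : K) :
    cyclicPerm * !![a, b, c; d, e, f; g, h, i] * cyclicPerm⁻¹ = !![i, g, h; c, a, b; f, d, e] := by
  rw [cyclicPerm_inv]
  ext i j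
  fin_cases i <;> fin_cases j <;> simp [cyclicPerm, Matrix.mul_apply, Fin.sum_univ_three]

theorem charpoly_fin_three_of_lower_zero [CommRing K] (a b c d e f g : K) :
    (!![a, b, c; d, e, f; 0, 0, g]).charpoly =
      (X ^ 2 - C (a + e) * X + C (a * e - b * d)) * (X - C g) := by
  simp only [charpoly, det_fin_three, charmatrix_apply_eq, charmatrix_apply_ne, ne_eq, Fin.reduceEq,
    not_false_eq_true, of_apply, cons_val', cons_val_zero, cons_val_one, cons_val, cons_val_fin_one,
    map_zero, map_add, map_sub, map_mul]
  ring

variable [Field K]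

/-- `R₁` is `triangularGen (exp (I * ψ / 3)) τ (conj τ)`. -/
def triangularGen (a τ σ : K) : Matrix (Fin 3) (Fin 3) K :=
  !![a ^ 2, τ, -a * σ; 0, a⁻¹, 0; 0, 0, a⁻¹]

theorem triangularGen_mul_cyclicPerm_conj {a : K} (ha : a ≠ 0) (τ σ : K) :
    triangularGen a τ σ * (cyclicPerm * triangularGen a τ σ * cyclicPerm⁻¹) =
      !![a * (1 - τ * σ), a ^ 2 * τ, τ ^ 2 - σ; -σ, a, a⁻¹ * τ; 0, 0, a⁻¹ ^ 2] := by
  rw [triangularGen, cyclicPerm_mul_mul_cyclicPerm_inv, mul_fin_three]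
  ext i j
  fin_cases i <;> fin_cases j <;> simp [field, ← sub_eq_add_neg]

theorem charpoly_triangularGen_mul_cyclicPerm_conj {a d τ σ : K} (ha : a ≠ 0) (hd : d ≠ 0)
    (h : τ * σ = 2 + d + d⁻¹) :
    (triangularGen a τ σ * (cyclicPerm * triangularGen a τ σ * cyclicPerm⁻¹)).charpoly =
      (X - C (-(a * d))) * (X - C (-(a * d⁻¹))) * (X - C (a⁻¹ ^ 2)) := by
  have htrace : a * (1 - τ * σ) + a = -(a * d) + -(a * d⁻¹) := by rw [h]; ring
  have hdet : a * (1 - τ * σ) * a - a ^ 2 * τ * -σ = -(a * d) * -(a * d⁻¹) := by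
    field_simp; ring
  rw [triangularGen_mul_cyclicPerm_conj ha, charpoly_fin_three_of_lower_zero, htrace, hdet]
  simp only [map_add, map_mul]
  ring

theorem R1R2_matrix_and_charpoly_general (p : ℕ) (τ : ℂ) (r s : ℕ)
    (ψ : ℝ) (hψ : ψ = 2 * π / p)
    (J R₁ R₂ : Matrix (Fin 3) (Fin 3) ℂ)
    (hJ : J = Matrix.of ![![0, 0, 1], ![1, 0, 0], ![0, 1, 0]])
    (hR : R₁ = Matrix.of
      ![![Complex.exp (2 * I * ψ / 3), τ, -Complex.exp (I * ψ / 3) * (starRingEnd ℂ) τ],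
        ![0, Complex.exp (-I * ψ / 3), 0],
        ![0, 0, Complex.exp (-I * ψ / 3)]])
    (hR2 : R₂ = J * R₁ * J⁻¹) :
    R₁ * R₂ = Matrix.of
      ![![Complex.exp (2 * π * I / (3 * p)) * (1 - ‖τ‖ ^ 2),
          Complex.exp (4 * π * I / (3 * p)) * τ, τ ^ 2 - (starRingEnd ℂ) τ],
        ![-(starRingEnd ℂ) τ, Complex.exp (2 * π * I / (3 * p)),
          Complex.exp (-2 * π * I / (3 * p)) * τ],
        ![0, 0, Complex.exp (-4 * π * I / (3 * p))]] ∧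
    (‖τ‖ ^ 2 = 2 + 2 * Real.cos (r * π / s) →
      (R₁ * R₂).charpoly =
        (X - C (-Complex.exp (2 * π * I / (3 * p) + r * π * I / s))) *
        (X - C (-Complex.exp (2 * π * I / (3 * p) - r * π * I / s))) *
        (X - C (Complex.exp (-4 * π * I / (3 * p))))) := by
  set ω := Complex.exp (2 * π * I / (3 * p))
  have hψω : I * ψ / 3 = 2 * π * I / (3 * p) := by rw [hψ]; push_cast; ring
  have hsq : Complex.exp (2 * I * ψ / 3) = ω ^ 2 := by
    rw [← Complex.exp_nat_mul]; congr 1; push_cast; linear_combination 2 * hψω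
  have hsq' : Complex.exp (4 * π * I / (3 * p)) = ω ^ 2 := by
    rw [← Complex.exp_nat_mul]; congr 1; push_cast; ring
  have hinv : Complex.exp (-I * ψ / 3) = ω⁻¹ := by
    rw [← Complex.exp_neg]; congr 1; linear_combination -hψω
  have hinv' : Complex.exp (-2 * π * I / (3 * p)) = ω⁻¹ := by
    rw [← Complex.exp_neg]; congr 1; ring
  have hinvsq : Complex.exp (-4 * π * I / (3 * p)) = ω⁻¹ ^ 2 := by
    rw [← Complex.exp_neg, ← Complex.exp_nat_mul]; congr 1; push_cast; ring
  have hprod : R₁ * R₂ = triangularGen ω τ (starRingEnd ℂ τ) *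
      (cyclicPerm * triangularGen ω τ (starRingEnd ℂ τ) * cyclicPerm⁻¹) := by
    rw [hR2, hJ, hR, hsq, hψω, hinv]; rfl
  refine ⟨?_, fun hτ => ?_⟩
  · rw [hprod, triangularGen_mul_cyclicPerm_conj (Complex.exp_ne_zero _), Complex.mul_conj', hsq',
      hinv', hinvsq]
  set θ : ℝ := r * π / s
  set d := Complex.exp (θ * I)
  have hθ : (r * π * I / s : ℂ) = θ * I := by simp only [θ]; push_cast; ring
  have hnorm : τ * starRingEnd ℂ τ = 2 + d + d⁻¹ := by
    rw [Complex.mul_conj', ← Complex.exp_neg, ← neg_mul, add_assoc, ← Complex.two_cos]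
    exact_mod_cast hτ
  rw [hprod, charpoly_triangularGen_mul_cyclicPerm_conj (Complex.exp_ne_zero _)
    (Complex.exp_ne_zero _) hnorm, hθ, Complex.exp_add, Complex.exp_sub, hinvsq, div_eq_mul_inv _ d]

theorem R1R2_matrix_and_charpoly (p : ℕ) (hp : 0 < p) (τ : ℂ) (r s : ℕ) (hs : 0 < s)
    (ψ : ℝ) (hψ : ψ = 2 * π / p)
    (J R₁ R₂ : Matrix (Fin 3) (Fin 3) ℂ)
    (hJ : J = Matrix.of ![![0, 0, 1], ![1, 0, 0], ![0, 1, 0]])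
    (hR : R₁ = Matrix.of
      ![![Complex.exp (2 * I * ψ / 3), τ, -Complex.exp (I * ψ / 3) * (starRingEnd ℂ) τ],
        ![0, Complex.exp (-I * ψ / 3), 0],
        ![0, 0, Complex.exp (-I * ψ / 3)]])
    (hR2 : R₂ = J * R₁ * J⁻¹) :
    R₁ * R₂ = Matrix.of
      ![![Complex.exp (2 * π * I / (3 * p)) * (1 - ‖τ‖ ^ 2),
          Complex.exp (4 * π * I / (3 * p)) * τ, τ ^ 2 - (starRingEnd ℂ) τ],
        ![-(starRingEnd ℂ) τ, Complex.exp (2 * π * I / (3 * p)),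
          Complex.exp (-2 * π * I / (3 * p)) * τ],
        ![0, 0, Complex.exp (-4 * π * I / (3 * p))]] ∧
    (‖τ‖ ^ 2 = 2 + 2 * Real.cos (r * π / s) →
      (R₁ * R₂).charpoly =
        (X - C (-Complex.exp (2 * π * I / (3 * p) + r * π * I / s))) *
        (X - C (-Complex.exp (2 * π * I / (3 * p) - r * π * I / s))) *
        (X - C (Complex.exp (-4 * π * I / (3 * p))))) :=
  R1R2_matrix_and_charpoly_general p τ r s ψ hψ J R₁ R₂ hJ hR hR2
end

section
/- Let τ = e^{iπ/3} + e^{−iπ/6}·√2 (so |τ|² = 3), let p ≥ 21 be divisible by 3, and set cosh²(δ_p) = |conj(τ)² + e^{−2πi/p}τ − τ|² / (2cos(2π/p) + 1)². Then cosh(δ_p)·sin(3π/p) < 1/2. -/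
/-!
Write θ = 2π/p. Since e^{-iπ/6} = -i·e^{iπ/3}, we have σ₁ = e^{iπ/3}(1 - i√2), hence |σ₁|² = 3
and σ₁³ = 5 + i√2. Expanding |conj(σ₁)² + (e^{-iθ} - 1)σ₁|² with these two values gives
5 + 4 cos θ + 2√2 sin θ, while sin²(3θ/2) = (1 - cos θ)(2 cos θ + 1)²/2 cancels the denominator.
So (cosh δ_p · sin(3π/p))² = (5 + 4 cos θ + 2√2 sin θ)(1 - cos θ)/2, and for θ ≤ 2π/21 < 3/10 the
first factor is below 9.9 and the second below 0.045.
-/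

open Real Complex ComplexConjugate

theorem normSq_conj_sq_add_mul_sub (τ w : ℂ) :
    normSq (conj τ ^ 2 + w * τ - τ) =
      normSq τ ^ 2 + normSq τ * normSq (w - 1) + 2 * (τ ^ 3 * (w - 1)).re := by
  have hre : (conj τ ^ 2 * conj ((w - 1) * τ)).re = (τ ^ 3 * (w - 1)).re := by
    rw [← conj_re]; congr 1; simp only [map_mul, map_pow, conj_conj]; ring
  rw [show conj τ ^ 2 + w * τ - τ = conj τ ^ 2 + (w - 1) * τ by ring, normSq_add, hre,
    map_pow, normSq_conj, normSq_mul]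
  ring

noncomputable def sigmaOne : ℂ := exp (I * π / 3) + exp (-I * π / 6) * (√2 : ℂ)

theorem sigmaOne_eq : sigmaOne = exp (π / 3 * I) * (1 - √2 * I) := by
  have h : exp (-I * π / 6) = exp (π / 3 * I) * (-I) := by
    rw [show -I * π / 6 = π / 3 * I + -π / 2 * I by ring, Complex.exp_add,
      exp_neg_pi_div_two_mul_I]
  rw [sigmaOne, h, show I * π / 3 = π / 3 * I by ring]
  ring

theorem normSq_sigmaOne : normSq sigmaOne = 3 := by
  have h : normSq (1 - √2 * I) = 3 := by
    rw [sub_eq_add_neg, ← neg_mul, ← ofReal_one, ← ofReal_neg, normSq_add_mul_I]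
    norm_num
  rw [sigmaOne_eq, normSq_mul, h, normSq_eq_norm_sq, ← ofReal_ofNat, ← ofReal_div,
    norm_exp_ofReal_mul_I]
  norm_num

theorem sigmaOne_pow_three : sigmaOne ^ 3 = 5 + √2 * I := by
  have h2 : ((√2 : ℝ) : ℂ) ^ 2 = 2 := by norm_cast; simp
  rw [sigmaOne_eq, mul_pow, ← Complex.exp_nat_mul, show ((3 : ℕ) : ℂ) * (π / 3 * I) = π * I by
    push_cast; ring, exp_pi_mul_I]
  linear_combination (3 - √2 * I) * h2 + ((√2 : ℂ) ^ 3 * I - 3 * (√2 : ℂ) ^ 2) * I_sq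

theorem normSq_conj_sigmaOne_sq_add_exp_mul_sub (θ : ℝ) :
    normSq (conj sigmaOne ^ 2 + exp (-θ * I) * sigmaOne - sigmaOne) =
      5 + 4 * Real.cos θ + 2 * √2 * Real.sin θ := by
  have hw : exp (-θ * I) - 1 = ⟨Real.cos θ - 1, -Real.sin θ⟩ := by
    apply Complex.ext <;>
      simp only [sub_re, sub_im, one_re, one_im, ← ofReal_neg, exp_ofReal_mul_I_re,
        exp_ofReal_mul_I_im, Real.cos_neg, Real.sin_neg, sub_zero]
  rw [normSq_conj_sq_add_mul_sub, normSq_sigmaOne, sigmaOne_pow_three, hw, normSq_mk]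
  simp only [mul_re, mul_im, add_re, add_im, ofReal_re, ofReal_im, I_re, I_im, re_ofNat,
    im_ofNat]
  linear_combination 3 * Real.sin_sq_add_cos_sq θ

theorem sin_sq_three_mul_div_two (θ : ℝ) :
    Real.sin (3 * θ / 2) ^ 2 = (1 - Real.cos θ) * (2 * Real.cos θ + 1) ^ 2 / 2 := by
  rw [sin_sq_eq_half_sub, show 2 * (3 * θ / 2) = 3 * θ by ring, Real.cos_three_mul]
  ring

theorem five_add_four_cos_add_two_sqrt_two_sin_mul_one_sub_cos_lt {θ : ℝ} (h0 : 0 < θ)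
    (h : θ ≤ 3 / 10) :
    (5 + 4 * Real.cos θ + 2 * √2 * Real.sin θ) * (1 - Real.cos θ) < 1 / 2 := by
  have hsqrt : √2 < 3 / 2 := (Real.sqrt_lt' (by norm_num)).2 (by norm_num)
  have hsin : Real.sin θ < θ := Real.sin_lt h0
  have hsin0 : 0 < Real.sin θ := Real.sin_pos_of_pos_of_lt_pi h0 (by linarith [pi_gt_three])
  have hcos : 1 - θ ^ 2 / 2 ≤ Real.cos θ := Real.one_sub_sq_div_two_le_cos
  have hfirst : 5 + 4 * Real.cos θ + 2 * √2 * Real.sin θ ≤ 99 / 10 := by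
    nlinarith [Real.cos_le_one θ]
  have hsecond : 1 - Real.cos θ ≤ 9 / 200 := by nlinarith
  calc (5 + 4 * Real.cos θ + 2 * √2 * Real.sin θ) * (1 - Real.cos θ)
      ≤ 99 / 10 * (9 / 200) :=
        mul_le_mul hfirst hsecond (by linarith [Real.cos_le_one θ]) (by norm_num)
    _ < 1 / 2 := by norm_num

theorem cosh_mul_sin_three_mul_div_two_lt {θ δ : ℝ} (h0 : 0 < θ) (h : θ ≤ 3 / 10)
    (hδ : Real.cosh δ ^ 2 =
      (5 + 4 * Real.cos θ + 2 * √2 * Real.sin θ) / (2 * Real.cos θ + 1) ^ 2) :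
    Real.cosh δ * Real.sin (3 * θ / 2) < 1 / 2 := by
  have hcos : 0 < Real.cos θ :=
    Real.cos_pos_of_mem_Ioo ⟨by linarith [pi_gt_three], by linarith [pi_gt_three]⟩
  have hsq : (Real.cosh δ * Real.sin (3 * θ / 2)) ^ 2 =
      (5 + 4 * Real.cos θ + 2 * √2 * Real.sin θ) * (1 - Real.cos θ) / 2 := by
    rw [mul_pow, hδ, sin_sq_three_mul_div_two]
    field_simp
  refine lt_of_pow_lt_pow_left₀ 2 (by norm_num) ?_
  rw [hsq]
  linarith [five_add_four_cos_add_two_sqrt_two_sin_mul_one_sub_cos_lt h0 h]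

theorem jorgensen_sigma1_multiples_of_3_general (τ : ℂ)
    (hτ : τ = Complex.exp (I * π / 3) + Complex.exp (-I * π / 6) * (Real.sqrt 2 : ℂ))
    (p : ℕ) (hp : 21 ≤ p) (δ : ℝ)
    (hδ : Real.cosh δ ^ 2 =
      ‖(starRingEnd ℂ) τ ^ 2 + Complex.exp (-2 * π * I / p) * τ - τ‖ ^ 2 /
        (2 * Real.cos (2 * π / p) + 1) ^ 2) :
    Real.cosh δ * Real.sin (3 * π / p) < 1 / 2 := by
  have hp' : (21 : ℝ) ≤ p := by exact_mod_cast hp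
  have hθ0 : 0 < 2 * π / p := by positivity
  have hθ : 2 * π / p ≤ 3 / 10 := by
    rw [div_le_iff₀ (by positivity)]
    nlinarith [pi_lt_d2]
  rw [show 3 * π / p = 3 * (2 * π / p) / 2 by ring]
  refine cosh_mul_sin_three_mul_div_two_lt hθ0 hθ ?_
  have hτ' : τ = sigmaOne := hτ
  have hexp : -2 * π * I / p = -((2 * π / p : ℝ) : ℂ) * I := by push_cast; ring
  rw [hδ, hτ', Complex.sq_norm, hexp, normSq_conj_sigmaOne_sq_add_exp_mul_sub]

theorem jorgensen_sigma1_multiples_of_3 (τ : ℂ)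
    (hτ : τ = Complex.exp (I * π / 3) + Complex.exp (-I * π / 6) * (Real.sqrt 2 : ℂ))
    (p : ℕ) (hp : 21 ≤ p) (h3 : 3 ∣ p) (δ : ℝ)
    (hδ : Real.cosh δ ^ 2 =
      ‖(starRingEnd ℂ) τ ^ 2 + Complex.exp (-2 * π * I / p) * τ - τ‖ ^ 2 /
        (2 * Real.cos (2 * π / p) + 1) ^ 2) :
    Real.cosh δ * Real.sin (3 * π / p) < 1 / 2 :=
  jorgensen_sigma1_multiples_of_3_general τ hτ p hp δ hδ
end

section
/- Let τ = e^{iπ/3} + e^{−iπ/6}·√2, p = 8, and cosh²(δ_p) = |conj(τ)² + e^{−iπ/4}τ − τ|² / (2cos(π/4) + 1)². Then cosh(δ_p)·sin(π/8) < 1/2. -/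
/-!
Everything is explicit: τ = (1 + √6)/2 + i(√3 − √2)/2, the numerator of cosh²δ is 7 + 2√2 and the
denominator is (1 + √2)² = 3 + 2√2, so cosh²δ = 13 − 8√2. With sin²(π/8) = (2 − √2)/4 the square of
cosh δ · sin(π/8) is (42 − 29√2)/4, and the inequality comes down to 41² = 1681 < 1682 = 2·29².
-/

open Real Complex

lemma Complex.exp_I_mul_ofReal_eq_mk (x : ℝ) :
    Complex.exp (I * x) = ⟨Real.cos x, Real.sin x⟩ := by
  rw [mul_comm, Complex.exp_mul_I]
  apply Complex.ext <;> simp [Complex.cos_ofReal_re, Complex.sin_ofReal_re]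

lemma exp_I_mul_pi_div_three : Complex.exp (I * π / 3) = ⟨1 / 2, √3 / 2⟩ := by
  rw [show I * (π : ℂ) / 3 = I * ((π / 3 : ℝ) : ℂ) by push_cast; ring,
    Complex.exp_I_mul_ofReal_eq_mk, Real.cos_pi_div_three, Real.sin_pi_div_three]

lemma exp_neg_I_mul_pi_div_six : Complex.exp (-I * π / 6) = ⟨√3 / 2, -(1 / 2)⟩ := by
  rw [show -I * (π : ℂ) / 6 = I * ((-(π / 6) : ℝ) : ℂ) by push_cast; ring,
    Complex.exp_I_mul_ofReal_eq_mk, Real.cos_neg, Real.sin_neg, Real.cos_pi_div_six,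
    Real.sin_pi_div_six]

lemma exp_neg_I_mul_pi_div_four : Complex.exp (-I * π / 4) = ⟨√2 / 2, -(√2 / 2)⟩ := by
  rw [show -I * (π : ℂ) / 4 = I * ((-(π / 4) : ℝ) : ℂ) by push_cast; ring,
    Complex.exp_I_mul_ofReal_eq_mk, Real.cos_neg, Real.sin_neg, Real.cos_pi_div_four,
    Real.sin_pi_div_four]

lemma sigma_one_eq_mk :
    Complex.exp (I * π / 3) + Complex.exp (-I * π / 6) * (√2 : ℂ) =
      ⟨1 / 2 + √2 * √3 / 2, √3 / 2 - √2 / 2⟩ := by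
  rw [exp_I_mul_pi_div_three, exp_neg_I_mul_pi_div_six]
  apply Complex.ext <;>
    simp only [Complex.add_re, Complex.add_im, Complex.mul_re, Complex.mul_im, Complex.ofReal_re,
      Complex.ofReal_im] <;>
    ring

lemma jorgensen_word_sigma_one_eq_mk :
    (starRingEnd ℂ) ⟨1 / 2 + √2 * √3 / 2, √3 / 2 - √2 / 2⟩ ^ 2 +
        Complex.exp (-I * π / 4) * ⟨1 / 2 + √2 * √3 / 2, √3 / 2 - √2 / 2⟩ -
        ⟨1 / 2 + √2 * √3 / 2, √3 / 2 - √2 / 2⟩ =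
      ⟨(3 * √2 * √3 + √2 + 2 * √3 - 2) / 4, (√2 * √3 - 3 * √2 - 2 * √3 - 2) / 4⟩ := by
  have h2 : √2 ^ 2 = 2 := Real.sq_sqrt (by norm_num)
  have h3 : √3 ^ 2 = 3 := Real.sq_sqrt (by norm_num)
  rw [exp_neg_I_mul_pi_div_four]
  apply Complex.ext <;> simp only [Complex.conj_re, Complex.conj_im, Complex.add_re,
    Complex.add_im, Complex.sub_re, Complex.sub_im, Complex.mul_re, Complex.mul_im, pow_two]
  · linear_combination ((√3 ^ 2 + √3 - 2) / 4) * h2 + (1 / 4) * h3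
  · linear_combination ((√3 - 1) / 4) * h2 + (-(√2 / 2)) * h3

lemma normSq_jorgensen_word_sigma_one :
    Complex.normSq ⟨(3 * √2 * √3 + √2 + 2 * √3 - 2) / 4, (√2 * √3 - 3 * √2 - 2 * √3 - 2) / 4⟩ =
      7 + 2 * √2 := by
  have h2 : √2 ^ 2 = 2 := Real.sq_sqrt (by norm_num)
  have h3 : √3 ^ 2 = 3 := Real.sq_sqrt (by norm_num)
  rw [Complex.normSq_mk]
  linear_combination ((10 * √3 ^ 2 + 10) / 16) * h2 + ((28 + 8 * √2) / 16) * h3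

lemma two_mul_cos_pi_div_four_add_one_sq : (2 * Real.cos (π / 4) + 1) ^ 2 = 3 + 2 * √2 := by
  rw [Real.cos_pi_div_four]
  linear_combination Real.sq_sqrt (show (0 : ℝ) ≤ 2 by norm_num)

lemma seven_add_two_mul_sqrt_two_div : (7 + 2 * √2) / (3 + 2 * √2) = 13 - 8 * √2 := by
  rw [div_eq_iff (by positivity)]
  linear_combination 16 * Real.sq_sqrt (show (0 : ℝ) ≤ 2 by norm_num)

lemma sin_pi_div_eight_sq : Real.sin (π / 8) ^ 2 = (2 - √2) / 4 := by
  rw [Real.sin_sq_eq_half_sub, show 2 * (π / 8) = π / 4 by ring, Real.cos_pi_div_four]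
  ring

lemma forty_one_lt_twenty_nine_mul_sqrt_two : 41 < 29 * √2 := by
  have : 41 / 29 < √2 := (Real.lt_sqrt (by norm_num)).2 (by norm_num)
  linarith

lemma mul_sin_pi_div_eight_lt_half {x : ℝ} (hx : x ^ 2 = 13 - 8 * √2) :
    x * Real.sin (π / 8) < 1 / 2 := by
  have h2 : √2 ^ 2 = 2 := Real.sq_sqrt (by norm_num)
  refine lt_of_pow_lt_pow_left₀ 2 (by norm_num) ?_
  have hprod : (x * Real.sin (π / 8)) ^ 2 = (42 - 29 * √2) / 4 := by
    rw [mul_pow, hx, sin_pi_div_eight_sq]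
    linear_combination 2 * h2
  rw [hprod]
  linarith [forty_one_lt_twenty_nine_mul_sqrt_two]

theorem jorgensen_sigma1_p8 (τ : ℂ)
    (hτ : τ = Complex.exp (I * π / 3) + Complex.exp (-I * π / 6) * (Real.sqrt 2 : ℂ))
    (δ : ℝ)
    (hδ : Real.cosh δ ^ 2 =
      ‖(starRingEnd ℂ) τ ^ 2 + Complex.exp (-I * π / 4) * τ - τ‖ ^ 2 /
        (2 * Real.cos (π / 4) + 1) ^ 2) :
    Real.cosh δ * Real.sin (π / 8) < 1 / 2 := by
  rw [hτ, sigma_one_eq_mk, jorgensen_word_sigma_one_eq_mk, Complex.sq_norm,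
    normSq_jorgensen_word_sigma_one, two_mul_cos_pi_div_four_add_one_sq,
    seven_add_two_mul_sqrt_two_div] at hδ
  exact mul_sin_pi_div_eight_lt_half hδ
end

section
/- Let τ = e^{2πi/9} + e^{−iπ/9}·2cos(2π/5) (so |τ|² = 2), let p ≥ 13 be odd, and set cosh²(δ_p) = |conj(τ)² + e^{−2πi/p}τ − τ|² / (2cos(2π/p))². Then cosh(δ_p)·sin(π/(2p)) < 1/2. -/
/-!
Crude bounds suffice. With `x = π / p ≤ 1 / 4`, the triangle inequality gives `‖τ‖ ≤ 2` and
`‖e^{-2ix} - 1‖ ≤ 2x`, so the numerator `‖τ̄² + (e^{-2ix} - 1) τ‖` is at most `4 + 4x`. Together with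
`sin (x / 2) ≤ x / 2` this bounds the product by `x (1 + x) / cos (2x)`, which is below `1 / 2`
because `cos (2x) ≥ 1 - 2x²`.
-/

open Real Complex

lemma norm_exp_add_exp_mul_two_cos_le_two :
    ‖Complex.exp (2 * π * I / 9) + Complex.exp (-I * π / 9) * (2 * Real.cos (2 * π / 5))‖
      ≤ 2 := by
  have hcos : Real.cos (2 * π / 5) ≤ 1 / 2 := by
    rw [← Real.cos_pi_div_three]
    exact Real.cos_le_cos_of_nonneg_of_le_pi (by positivity) (by linarith [pi_pos])
      (by linarith [pi_pos])
  have hcos₀ : 0 ≤ Real.cos (2 * π / 5) :=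
    Real.cos_nonneg_of_mem_Icc ⟨by linarith [pi_pos], by linarith [pi_pos]⟩
  calc _ ≤ ‖Complex.exp (2 * π * I / 9)‖ +
          ‖Complex.exp (-I * π / 9)‖ * (2 * Real.cos (2 * π / 5)) := by
        refine (norm_add_le _ _).trans_eq ?_
        rw [norm_mul]
        norm_cast
        rw [Real.norm_of_nonneg (by positivity)]
    _ ≤ 2 := by
        simp only [norm_exp, div_ofNat_re, mul_re, re_ofNat, ofReal_re, im_ofNat, ofReal_im,
          mul_zero, sub_zero, I_re, mul_im, zero_mul, add_zero, I_im, mul_one, sub_self, zero_div,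
          Real.exp_zero, neg_mul, neg_re, neg_zero, one_mul]
        linarith

lemma norm_conj_sq_add_mul_sub_le (z w : ℂ) :
    ‖starRingEnd ℂ z ^ 2 + w * z - z‖ ≤ ‖z‖ ^ 2 + ‖w - 1‖ * ‖z‖ :=
  calc _ = ‖starRingEnd ℂ z ^ 2 + (w - 1) * z‖ := by ring_nf
    _ ≤ _ := by
      refine (norm_add_le _ _).trans_eq ?_
      rw [norm_pow, Complex.norm_conj, norm_mul]

lemma two_mul_mul_one_add_lt_cos_two_mul {x : ℝ} (hx₀ : 0 ≤ x) (hx : x ≤ 1 / 4) :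
    2 * x * (1 + x) < Real.cos (2 * x) := by
  nlinarith [Real.one_sub_sq_div_two_le_cos (x := 2 * x)]

lemma cosh_eq_div_of_cosh_sq_eq_div_sq {δ a b : ℝ} (ha : 0 ≤ a) (hb : 0 ≤ b)
    (h : Real.cosh δ ^ 2 = a ^ 2 / b ^ 2) : Real.cosh δ = a / b := by
  rw [← div_pow] at h
  exact (pow_left_inj₀ (Real.cosh_pos δ).le (by positivity) two_ne_zero).1 h

lemma div_two_mul_mul_sin_half_lt {x a c : ℝ} (hx₀ : 0 ≤ x) (ha₀ : 0 ≤ a)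
    (ha : a ≤ 4 + 4 * x) (hc : 2 * x * (1 + x) < c) :
    a / (2 * c) * Real.sin (x / 2) < 1 / 2 := by
  have hc₀ : 0 < c := by nlinarith
  calc a / (2 * c) * Real.sin (x / 2) ≤ a / (2 * c) * (x / 2) :=
        mul_le_mul_of_nonneg_left (Real.sin_le (by positivity)) (by positivity)
    _ < 1 / 2 := by
        rw [div_mul_eq_mul_div, div_lt_iff₀ (by positivity)]
        nlinarith

theorem jorgensen_sigma5_odd_general (τ : ℂ)
    (hτ : τ = Complex.exp (2 * π * I / 9) +
      Complex.exp (-I * π / 9) * (2 * Real.cos (2 * π / 5)))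
    (p : ℕ) (hp : 13 ≤ p) (δ : ℝ)
    (hδ : Real.cosh δ ^ 2 =
      ‖(starRingEnd ℂ) τ ^ 2 + Complex.exp (-2 * π * I / p) * τ - τ‖ ^ 2 /
        (2 * Real.cos (2 * π / p)) ^ 2) :
    Real.cosh δ * Real.sin (π / (2 * p)) < 1 / 2 := by
  set x := π / p with hx_def
  have hx₀ : 0 ≤ x := by positivity
  have hx : x ≤ 1 / 4 := by
    rw [div_le_iff₀ (by positivity)]
    linarith [pi_lt_d2, show (13 : ℝ) ≤ p by exact_mod_cast hp]
  have hτ₂ : ‖τ‖ ≤ 2 := hτ ▸ norm_exp_add_exp_mul_two_cos_le_two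
  have hw : ‖Complex.exp (-2 * π * I / p) - 1‖ ≤ 2 * x := by
    have := Real.norm_exp_I_mul_ofReal_sub_one_le (x := -(2 * x))
    rw [Real.norm_eq_abs, abs_neg, abs_of_nonneg (by positivity)] at this
    convert this using 4
    push_cast [hx_def]
    ring
  have hnum : ‖(starRingEnd ℂ) τ ^ 2 + Complex.exp (-2 * π * I / p) * τ - τ‖ ≤ 4 + 4 * x := by
    nlinarith [norm_conj_sq_add_mul_sub_le τ (Complex.exp (-2 * π * I / p)), norm_nonneg τ,
      norm_nonneg (Complex.exp (-2 * π * I / p) - 1)]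
  have hcos := two_mul_mul_one_add_lt_cos_two_mul hx₀ hx
  rw [show 2 * π / p = 2 * x by ring] at hδ
  rw [cosh_eq_div_of_cosh_sq_eq_div_sq (norm_nonneg _) (by nlinarith) hδ,
    show π / (2 * p) = x / 2 by ring]
  exact div_two_mul_mul_sin_half_lt hx₀ (norm_nonneg _) hnum hcos

theorem jorgensen_sigma5_odd (τ : ℂ)
    (hτ : τ = Complex.exp (2 * π * I / 9) +
      Complex.exp (-I * π / 9) * (2 * Real.cos (2 * π / 5)))
    (p : ℕ) (hp : 13 ≤ p) (hodd : Odd p) (δ : ℝ)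
    (hδ : Real.cosh δ ^ 2 =
      ‖(starRingEnd ℂ) τ ^ 2 + Complex.exp (-2 * π * I / p) * τ - τ‖ ^ 2 /
        (2 * Real.cos (2 * π / p)) ^ 2) :
    Real.cosh δ * Real.sin (π / (2 * p)) < 1 / 2 :=
  jorgensen_sigma5_odd_general τ hτ p hp δ hδ
end

section
/- Let τ = (−1−i√7)/2 and p = 20. Set α = π/5 and cosh²(δ) = |conj(τ)² + e^{−iπ/10}τ − τ|² / (2cos(π/10))². Then cos(π/3) < cosh(δ)·sin(α) < cos(π/4), and cosh(δ)·sin(α) ≠ cos(2α). -/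
/-!
Since `τ = (-1 - i√7)/2` is a root of `z² + z + 2`, so is `τ̄`, whence `τ̄² = τ - 1` and the
numerator is `‖e^{-iπ/10} τ - 1‖² = 3 + c + √7 s` with `s = sin (π/10)`, `c = cos (π/10)`.
As `sin (π/5) = 2 s c`, the quantity `X = cosh δ · sin (π/5)` satisfies `X² = s² (3 + c + √7 s)`,
and `s = (√5 - 1)/4` gives `X² ≈ 0.455`, strictly between `1/4` and `1/2`. Finally
`cos (2π/5) = s < 1/2 < X`.
-/

open Real Complex Set

namespace Real

theorem cos_two_mul_pi_div_five : cos (2 * (π / 5)) = (√5 - 1) / 4 := by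
  rw [cos_two_mul, cos_pi_div_five]
  linear_combination (1 / 8 : ℝ) * sq_sqrt (show (0 : ℝ) ≤ 5 by norm_num)

theorem sin_pi_div_ten : sin (π / 10) = (√5 - 1) / 4 := by
  rw [show π / 10 = π / 2 - 2 * (π / 5) by ring, sin_pi_div_two_sub, cos_two_mul_pi_div_five]

theorem sin_pi_div_ten_mem_Ioo : sin (π / 10) ∈ Ioo 0.3 0.31 := by
  have h5l : (2.2 : ℝ) < √5 := (lt_sqrt (by norm_num)).2 (by norm_num)
  have h5u : √5 < 2.24 := (sqrt_lt' (by norm_num)).2 (by norm_num)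
  rw [sin_pi_div_ten]
  constructor <;> linarith

theorem cos_pi_div_ten_gt : 0.9 < cos (π / 10) := by
  have hπ : π / 10 < 0.32 := by linarith [pi_lt_d2]
  have hπ0 : 0 < π / 10 := by positivity
  nlinarith [one_sub_sq_div_two_le_cos (x := π / 10)]

theorem sqrt_seven_mem_Ioo : √7 ∈ Ioo 2.6 2.7 :=
  ⟨(lt_sqrt (by norm_num)).2 (by norm_num), (sqrt_lt' (by norm_num)).2 (by norm_num)⟩

end Real

theorem sq_mul_add_mem_Ioo {s c r : ℝ} (hs : s ∈ Ioo 0.3 0.31) (hc : c ∈ Icc 0.9 1)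
    (hr : r ∈ Ioo 2.6 2.7) : s ^ 2 * (3 + c + r * s) ∈ Ioo (1 / 4) (1 / 2) := by
  obtain ⟨hs₁, hs₂⟩ := hs
  obtain ⟨hc₁, hc₂⟩ := hc
  obtain ⟨hr₁, hr₂⟩ := hr
  have hrs₁ : 0.78 < r * s := by nlinarith
  have hrs₂ : r * s < 0.837 := by nlinarith
  have hs2₁ : 0.09 < s ^ 2 := by nlinarith
  have hs2₂ : s ^ 2 < 0.0961 := by nlinarith
  constructor <;> nlinarith

namespace Complex

theorem conj_sq_eq_sub_one {τ : ℂ} (hτ : τ = (-1 - I * √7) / 2) :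
    starRingEnd ℂ τ ^ 2 = τ - 1 := by
  have h7 : ((√7 : ℝ) : ℂ) ^ 2 = 7 := by norm_cast; exact Real.sq_sqrt (by norm_num)
  subst hτ
  simp only [map_div₀, map_sub, map_neg, map_one, map_mul, conj_I, conj_ofReal, map_ofNat]
  linear_combination (1 / 4 : ℂ) * ((√7 : ℝ) : ℂ) ^ 2 * I_sq - (1 / 4 : ℂ) * h7

theorem norm_exp_neg_mul_I_mul_sub_one_sq {τ : ℂ} (hτ : τ = (-1 - I * √7) / 2) (x : ℝ) :
    ‖exp (-I * x) * τ - 1‖ ^ 2 = 3 + Real.cos x + √7 * Real.sin x := by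
  have hre_im : exp (-I * x) * τ - 1 =
      (((-2 - Real.cos x - √7 * Real.sin x) / 2 : ℝ) : ℂ) +
        (((Real.sin x - √7 * Real.cos x) / 2 : ℝ) : ℂ) * I := by
    subst hτ
    apply Complex.ext <;> simp [exp_re, exp_im, cos_ofReal_re, sin_ofReal_re] <;> ring
  rw [hre_im, ← normSq_eq_norm_sq, normSq_add_mul_I]
  linear_combination (1 + √7 ^ 2) / 4 * Real.sin_sq_add_cos_sq x +
    (1 / 4 : ℝ) * Real.sq_sqrt (show (0 : ℝ) ≤ 7 by norm_num)

end Complex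

theorem knapp_sigma4bar_p20_general (τ : ℂ) (hτ : τ = (-1 - I * Real.sqrt 7) / 2)
    (α δ : ℝ) (hα : α = π / 5)
    (hδ : Real.cosh δ ^ 2 =
      ‖(starRingEnd ℂ) τ ^ 2 + Complex.exp (-I * π / 10) * τ - τ‖ ^ 2 /
        (2 * Real.cos (π / 10)) ^ 2) :
    Real.cos (π / 3) < Real.cosh δ * Real.sin α ∧
    Real.cosh δ * Real.sin α < Real.cos (π / 4) ∧
    Real.cosh δ * Real.sin α ≠ Real.cos (2 * α) := by
  set s := Real.sin (π / 10)
  set c := Real.cos (π / 10)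
  have hnorm : ‖(starRingEnd ℂ) τ ^ 2 + Complex.exp (-I * π / 10) * τ - τ‖ ^ 2 =
      3 + c + √7 * s := by
    rw [Complex.conj_sq_eq_sub_one hτ, show -I * (π : ℂ) / 10 = -I * ((π / 10 : ℝ) : ℂ) by
      push_cast; ring, ← Complex.norm_exp_neg_mul_I_mul_sub_one_sq hτ]
    congr 2; ring
  have hsin : Real.sin α = 2 * s * c := by rw [hα, ← Real.sin_two_mul]; congr 1; ring
  have hX : (Real.cosh δ * Real.sin α) ^ 2 = s ^ 2 * (3 + c + √7 * s) := by
    have hc : c ≠ 0 := by linarith [Real.cos_pi_div_ten_gt]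
    rw [mul_pow, hδ, hnorm, hsin]; field_simp
  obtain ⟨hX₁, hX₂⟩ := sq_mul_add_mem_Ioo Real.sin_pi_div_ten_mem_Ioo
    ⟨Real.cos_pi_div_ten_gt.le, Real.cos_le_one _⟩ Real.sqrt_seven_mem_Ioo
  rw [← hX] at hX₁ hX₂
  have hXpos : 0 < Real.cosh δ * Real.sin α := by
    rw [hα]
    exact mul_pos (Real.cosh_pos δ)
      (Real.sin_pos_of_pos_of_lt_pi (by positivity) (by linarith [pi_pos]))
  have hhalf : 1 / 2 < Real.cosh δ * Real.sin α :=
    lt_of_pow_lt_pow_left₀ 2 hXpos.le (by linarith)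
  refine ⟨by rwa [Real.cos_pi_div_three], ?_, ?_⟩
  · rw [Real.cos_pi_div_four]
    refine lt_of_pow_lt_pow_left₀ 2 (by positivity) ?_
    rwa [div_pow, Real.sq_sqrt zero_le_two, show (2 : ℝ) / 2 ^ 2 = 1 / 2 by norm_num]
  · rw [show Real.cos (2 * α) = s by
      rw [hα, Real.cos_two_mul_pi_div_five, ← Real.sin_pi_div_ten]]
    have hs : s < 1 / 2 := by linarith [Real.sin_pi_div_ten_mem_Ioo.2]
    exact (hs.trans hhalf).ne'

theorem knapp_sigma4bar_p20 (τ : ℂ) (hτ : τ = (-1 - I * Real.sqrt 7) / 2)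
    (α δ : ℝ) (hα : α = π / 5)
    (hδ : Real.cosh δ ^ 2 =
      ‖(starRingEnd ℂ) τ ^ 2 + Complex.exp (-I * π / 10) * τ - τ‖ ^ 2 /
        (2 * Real.cos (π / 10)) ^ 2)
    (hδ0 : 0 ≤ δ) :
    Real.cos (π / 3) < Real.cosh δ * Real.sin α ∧
    Real.cosh δ * Real.sin α < Real.cos (π / 4) ∧
    Real.cosh δ * Real.sin α ≠ Real.cos (2 * α) :=
  knapp_sigma4bar_p20_general τ hτ α δ hα hδ
end
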